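/- arXiv:2601.05217 — 3 statements merged into one kernel-verified Lean document; each statement's English description precedes it below -/
import Mathlib

section
/- Let (Ω, F) be a measurable space and let (μ_α) be an increasing net of countably additive finite nonnegative measures on F with sup_α μ_α(Ω) < ∞. Then the set function μ defined by μ(A) = sup_α μ_α(A) is a countably additive finite nonnegative measure. -/
/-! Over a directed index set, suprema of monotone families in `ℝ≥0∞` commute with countable sums,
so the setwise supremum of an increasing net of measures is countably additive. Being a measure above
every `μs i`, it dominates the lattice supremum `⨆ i, μs i`, which therefore takes the setwise values
on measurable sets. -/

open MeasureTheory

theorem ENNReal.tsum_iSup_of_monotone {α ι : Type*} [Preorder ι] [IsDirectedOrder ι]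
    {f : ι → α → ENNReal} (hf : ∀ a, Monotone (f · a)) :
    ∑' a, ⨆ i, f i a = ⨆ i, ∑' a, f i a := by
  simp only [ENNReal.tsum_eq_iSup_sum, ENNReal.finsetSum_iSup_of_monotone hf]
  exact iSup_comm

namespace MeasureTheory.Measure

variable {Ω ι : Type*} [MeasurableSpace Ω] [Preorder ι] [IsDirectedOrder ι]

theorem iSup_apply_of_monotone {μs : ι → Measure Ω} (hμ : Monotone μs) {A : Set Ω}
    (hA : MeasurableSet A) : (⨆ i, μs i) A = ⨆ i, μs i A := by
  let ν : Measure Ω := ofMeasurable (fun B _ => ⨆ i, μs i B) (by simp) fun f hf hdisj => by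
    simp only [measure_iUnion hdisj hf]
    exact (ENNReal.tsum_iSup_of_monotone fun n _ _ hij => hμ hij (f n)).symm
  have hν : ∀ B, MeasurableSet B → ν B = ⨆ i, μs i B := fun B hB => ofMeasurable_apply B hB
  have hle : (⨆ i, μs i) ≤ ν :=
    iSup_le fun i => le_iff.2 fun B hB => (hν B hB).symm ▸ le_iSup (μs · B) i
  exact le_antisymm ((hle A).trans (hν A hA).le) (iSup_le fun i => le_iff'.1 (le_iSup μs i) A)

end MeasureTheory.Measure

theorem stmt3_general {Ω : Type*} [MeasurableSpace Ω] {ι : Type*} [Preorder ι]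
    [IsDirected ι (· ≤ ·)] (μs : ι → Measure Ω)
    (hmono : ∀ a b : ι, a ≤ b → ∀ A : Set Ω, μs a A ≤ μs b A)
    (hbdd : (⨆ a, μs a Set.univ) < ⊤) :
    ∃ μ : Measure Ω, (∀ A : Set Ω, MeasurableSet A → μ A = ⨆ a, μs a A) ∧
      μ Set.univ < ⊤ := by
  have hμs : Monotone μs := fun a b hab => Measure.le_iff'.2 (hmono a b hab)
  exact ⟨⨆ a, μs a, fun A hA => Measure.iSup_apply_of_monotone hμs hA,
    (Measure.iSup_apply_of_monotone hμs .univ).trans_lt hbdd⟩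

/-- The setwise supremum of a bounded increasing net of finite (countably additive)
nonnegative measures is again a finite countably additive measure. -/
theorem stmt3 {Ω : Type*} [MeasurableSpace Ω] {ι : Type*} [Preorder ι] [Nonempty ι]
    [IsDirected ι (· ≤ ·)] (μs : ι → Measure Ω)
    (hmono : ∀ a b : ι, a ≤ b → ∀ A : Set Ω, μs a A ≤ μs b A)
    (hbdd : (⨆ a, μs a Set.univ) < ⊤) :
    ∃ μ : Measure Ω, (∀ A : Set Ω, MeasurableSet A → μ A = ⨆ a, μs a A) ∧
      μ Set.univ < ⊤ :=
  stmt3_general μs hmono hbdd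
end

section
/- Let d_TV be the total variation distance between probability measures and Φ the set of tests (measurable functions into [0,1]). Define the minimax risk R(P, Q) = inf_{φ ∈ Φ} [sup_{μ ∈ P} E_μ[φ] + sup_{ν ∈ Q} E_ν[1−φ]] for nonempty sets P, Q of probability measures. Then R(P, Q) ≥ 1 − d_TV(conv(P), conv(Q)), where the distance between sets is the infimum of pairwise distances and conv denotes the set of finite convex combinations. -/
open MeasureTheory
open scoped ENNReal

/-- Finite convex combinations of a set of measures. -/
def convHull {Ω : Type*} [MeasurableSpace Ω] (P : Set (Measure Ω)) : Set (Measure Ω) :=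
  {μ | ∃ (n : ℕ) (w : Fin n → ℝ≥0∞) (μs : Fin n → Measure Ω),
    (∀ i, μs i ∈ P) ∧ (∑ i, w i = 1) ∧ μ = ∑ i, w i • μs i}

/-- Total variation distance. -/
noncomputable def tvDist {Ω : Type*} [MeasurableSpace Ω] (μ ν : Measure Ω) : ℝ :=
  ⨆ A : {s : Set Ω // MeasurableSet s}, |(μ A.1).toReal - (ν A.1).toReal|

/-!
For a test `φ` and measures `μ`, `ν`, the layer-cake formula writes `∫ φ dν - ∫ φ dμ`
as the integral over `t ∈ (0, 1]` of `ν {t ≤ φ} - μ {t ≤ φ}`, which is at most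
`d_TV(μ, ν)`; hence `∫ φ dμ + ∫ (1 - φ) dν ≥ 1 - d_TV(μ, ν)`. Integrals against a
convex combination of measures of `P` are convex combinations of integrals, so they are
bounded by the supremum over `P`. Taking `μ ∈ conv P`, `ν ∈ conv Q` arbitrary gives the bound.
-/

section TestingRisk

open Set

variable {Ω : Type*} [MeasurableSpace Ω]

lemma mem_convHull_of_mem {P : Set (Measure Ω)} {μ : Measure Ω} (h : μ ∈ P) :
    μ ∈ convHull P :=
  ⟨1, fun _ => 1, fun _ => μ, fun _ => h, by simp, by simp⟩

lemma isProbabilityMeasure_of_mem_convHull {P : Set (Measure Ω)}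
    (hP : ∀ μ ∈ P, IsProbabilityMeasure μ) {μ : Measure Ω} (h : μ ∈ convHull P) :
    IsProbabilityMeasure μ := by
  obtain ⟨n, w, μs, hμs, hw, rfl⟩ := h
  have hμs_univ : ∀ i, μs i univ = 1 := fun i => (hP _ (hμs i)).measure_univ
  constructor
  simp [hμs_univ, hw]

lemma integral_le_iSup_of_mem_convHull {P : Set (Measure Ω)} {f : Ω → ℝ}
    (hf : ∀ μ ∈ P, Integrable f μ)
    (hbdd : BddAbove (range fun μ : P => ∫ x, f x ∂(μ : Measure Ω)))
    {μ : Measure Ω} (hμ : μ ∈ convHull P) :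
    ∫ x, f x ∂μ ≤ ⨆ μ' : P, ∫ x, f x ∂(μ' : Measure Ω) := by
  obtain ⟨n, w, μs, hμs, hw, rfl⟩ := hμ
  set S := ⨆ μ' : P, ∫ x, f x ∂(μ' : Measure Ω)
  have hw_ne_top : ∀ i, w i ≠ ∞ := fun i =>
    ne_top_of_le_ne_top ENNReal.one_ne_top
      (hw ▸ Finset.single_le_sum (by simp) (Finset.mem_univ i))
  have hw_real : ∑ i, (w i).toReal = 1 := by
    rw [← ENNReal.toReal_sum fun i _ => hw_ne_top i, hw, ENNReal.toReal_one]
  calc ∫ x, f x ∂(∑ i, w i • μs i)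
      = ∑ i, (w i).toReal * ∫ x, f x ∂(μs i) := by
        rw [integral_finsetSum_measure fun i _ => (hf _ (hμs i)).smul_measure (hw_ne_top i)]
        simp only [integral_smul_measure, smul_eq_mul]
    _ ≤ ∑ i, (w i).toReal * S := by
        gcongr with i
        exact le_ciSup hbdd ⟨μs i, hμs i⟩
    _ = S := by rw [← Finset.sum_mul, hw_real, one_mul]

variable {φ : Ω → ℝ}

lemma bddAbove_integral_of_mem_Icc {P : Set (Measure Ω)}
    (hP : ∀ μ ∈ P, IsProbabilityMeasure μ) (hφ : ∀ x, φ x ∈ Icc (0 : ℝ) 1) :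
    BddAbove (range fun μ : P => ∫ x, φ x ∂(μ : Measure Ω)) := by
  refine ⟨1, ?_⟩
  rintro _ ⟨⟨μ, hμ⟩, rfl⟩
  have := hP μ hμ
  calc ∫ x, φ x ∂μ ≤ ∫ _, (1 : ℝ) ∂μ :=
        integral_mono_of_nonneg (.of_forall fun x => (hφ x).1) (integrable_const 1)
          (.of_forall fun x => (hφ x).2)
    _ = 1 := by simp

lemma integrable_of_mem_Icc (μ : Measure Ω) [IsFiniteMeasure μ] (hφm : Measurable φ)
    (hφ : ∀ x, φ x ∈ Icc (0 : ℝ) 1) : Integrable φ μ :=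
  .of_bound hφm.aestronglyMeasurable 1 <| .of_forall fun x =>
    abs_le.mpr ⟨by linarith [(hφ x).1], (hφ x).2⟩

lemma abs_measureReal_sub_le_tvDist (μ ν : Measure Ω) [IsFiniteMeasure μ] [IsFiniteMeasure ν]
    {A : Set Ω} (hA : MeasurableSet A) : |μ.real A - ν.real A| ≤ tvDist μ ν := by
  refine le_ciSup (f := fun B : {s : Set Ω // MeasurableSet s} => |μ.real B.1 - ν.real B.1|)
    ⟨μ.real univ + ν.real univ, ?_⟩ ⟨A, hA⟩
  rintro _ ⟨B, rfl⟩
  have hμB : μ.real B.1 ≤ μ.real univ := measureReal_mono (subset_univ _)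
  have hνB : ν.real B.1 ≤ ν.real univ := measureReal_mono (subset_univ _)
  have := measureReal_nonneg (μ := μ) (s := B.1)
  have := measureReal_nonneg (μ := ν) (s := B.1)
  exact abs_sub_le_iff.mpr ⟨by linarith, by linarith⟩

lemma integral_sub_integral_le_tvDist (μ ν : Measure Ω) [IsFiniteMeasure μ] [IsFiniteMeasure ν]
    (hφm : Measurable φ) (hφ : ∀ x, φ x ∈ Icc (0 : ℝ) 1) :
    ∫ x, φ x ∂ν - ∫ x, φ x ∂μ ≤ tvDist μ ν := by
  have layer_cake : ∀ (ρ : Measure Ω) [IsFiniteMeasure ρ],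
      ∫ x, φ x ∂ρ = ∫ t in Ioc 0 1, ρ.real {x | t ≤ φ x} := fun ρ _ =>
    (integrable_of_mem_Icc ρ hφm hφ).integral_eq_integral_Ioc_meas_le
      (.of_forall fun x => (hφ x).1) (.of_forall fun x => (hφ x).2)
  have tail_integrable : ∀ (ρ : Measure Ω) [IsFiniteMeasure ρ],
      IntegrableOn (fun t => ρ.real {x | t ≤ φ x}) (Ioc 0 1) := fun ρ _ => by
    have h_anti : Antitone fun t => ρ.real {x | t ≤ φ x} := fun _ _ hst =>
      measureReal_mono fun _ hx => hst.trans hx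
    exact (h_anti.antitoneOn _ |>.integrableOn_isCompact isCompact_Icc).mono_set
      Ioc_subset_Icc_self
  rw [layer_cake ν, layer_cake μ, ← integral_sub (tail_integrable ν) (tail_integrable μ)]
  calc ∫ t in Ioc 0 1, (ν.real {x | t ≤ φ x} - μ.real {x | t ≤ φ x})
      ≤ ∫ _ in Ioc (0 : ℝ) 1, tvDist μ ν := by
        refine setIntegral_mono ((tail_integrable ν).sub (tail_integrable μ))
          (integrableOn_const (by simp)) fun t => ?_
        calc ν.real {x | t ≤ φ x} - μ.real {x | t ≤ φ x}
            ≤ |μ.real {x | t ≤ φ x} - ν.real {x | t ≤ φ x}| := by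
              rw [abs_sub_comm]; exact le_abs_self _
          _ ≤ tvDist μ ν := abs_measureReal_sub_le_tvDist μ ν (hφm measurableSet_Ici)
    _ = tvDist μ ν := by simp

lemma one_sub_tvDist_le_integral_add_integral_one_sub (μ ν : Measure Ω)
    [IsProbabilityMeasure μ] [IsProbabilityMeasure ν] (hφm : Measurable φ)
    (hφ : ∀ x, φ x ∈ Icc (0 : ℝ) 1) :
    1 - tvDist μ ν ≤ ∫ x, φ x ∂μ + ∫ x, (1 - φ x) ∂ν := by
  have h_compl : ∫ x, (1 - φ x) ∂ν = 1 - ∫ x, φ x ∂ν := by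
    rw [integral_sub (integrable_const 1) (integrable_of_mem_Icc ν hφm hφ)]
    simp
  linarith [integral_sub_integral_le_tvDist μ ν hφm hφ]

end TestingRisk

/-- Weak duality: the minimax testing risk is at least
`1 − d_TV(conv(P), conv(Q))`. -/
theorem stmt11 {Ω : Type*} [MeasurableSpace Ω] (P Q : Set (Measure Ω))
    (hP : ∀ μ ∈ P, IsProbabilityMeasure μ) (hQ : ∀ ν ∈ Q, IsProbabilityMeasure ν)
    (hPne : P.Nonempty) (hQne : Q.Nonempty) :
    (⨅ φ : {f : Ω → ℝ // Measurable f ∧ ∀ x, f x ∈ Set.Icc (0:ℝ) 1},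
        ((⨆ μ : P, ∫ x, φ.1 x ∂(μ : Measure Ω)) +
          ⨆ ν : Q, ∫ x, (1 - φ.1 x) ∂(ν : Measure Ω)))
      ≥ 1 - ⨅ μ : convHull P, ⨅ ν : convHull Q, tvDist (μ : Measure Ω) (ν : Measure Ω) := by
  obtain ⟨μ₀, hμ₀⟩ := hPne
  obtain ⟨ν₀, hν₀⟩ := hQne
  have : Nonempty (convHull P) := ⟨⟨μ₀, mem_convHull_of_mem hμ₀⟩⟩
  have : Nonempty (convHull Q) := ⟨⟨ν₀, mem_convHull_of_mem hν₀⟩⟩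
  have : Nonempty {f : Ω → ℝ // Measurable f ∧ ∀ x, f x ∈ Set.Icc (0:ℝ) 1} :=
    ⟨⟨0, measurable_const, fun _ => ⟨le_rfl, zero_le_one⟩⟩⟩
  refine le_ciInf fun ⟨φ, hφm, hφ⟩ => sub_le_comm.mp <|
    le_ciInf fun ⟨μ, hμ⟩ => le_ciInf fun ⟨ν, hν⟩ => sub_le_comm.mp ?_
  have := isProbabilityMeasure_of_mem_convHull hP hμ
  have := isProbabilityMeasure_of_mem_convHull hQ hν
  have hφ' : ∀ x, 1 - φ x ∈ Set.Icc (0 : ℝ) 1 := fun x =>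
    Set.Icc.mem_iff_one_sub_mem.mp (hφ x)
  have hP_le : ∫ x, φ x ∂μ ≤ ⨆ μ' : P, ∫ x, φ x ∂(μ' : Measure Ω) :=
    integral_le_iSup_of_mem_convHull
      (fun μ' hμ' => have := hP μ' hμ'; integrable_of_mem_Icc μ' hφm hφ)
      (bddAbove_integral_of_mem_Icc hP hφ) hμ
  have hQ_le : ∫ x, (1 - φ x) ∂ν ≤ ⨆ ν' : Q, ∫ x, (1 - φ x) ∂(ν' : Measure Ω) :=
    integral_le_iSup_of_mem_convHull
      (fun ν' hν' => have := hQ ν' hν'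
        integrable_of_mem_Icc ν' (measurable_const.sub hφm) hφ')
      (bddAbove_integral_of_mem_Icc hQ hφ') hν
  calc 1 - tvDist μ ν ≤ ∫ x, φ x ∂μ + ∫ x, (1 - φ x) ∂ν :=
        one_sub_tvDist_le_integral_add_integral_one_sub μ ν hφm hφ
    _ ≤ _ := add_le_add hP_le hQ_le
end

section
/- Let ν be a probability measure and P a set of probability measures on (Ω, F). If for every test φ we have E_ν[φ] ≤ sup_{μ ∈ P} E_μ[φ], then ν belongs to the effective null P_eff, i.e., E_ν[Z] ≤ 1 for every e-variable Z for P. Conversely, if ν ∈ P_eff then E_ν[φ] ≤ sup_{μ ∈ P} E_μ[φ] for every test φ. -/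
/-!
Tests and e-variables are exchanged by rescaling. If `ν` is dominated by `P` on tests and `Z` is
an e-variable, then `n⁻¹ * min Z n` is a test whose `P`-expectations are at most `n⁻¹`, so
`E_ν[min Z n] ≤ 1` for every `n`, and monotone convergence gives `E_ν[Z] ≤ 1`. Conversely, if
every `P`-expectation of a test `φ` is at most `c > 0`, then `φ / c` is an e-variable, so
`E_ν[φ] ≤ c`; taking `c` just above the supremum of these expectations gives the claim.
-/

open MeasureTheory
open scoped ENNReal

section

variable {Ω : Type*} [MeasurableSpace Ω]

def IsTest (φ : Ω → ℝ) : Prop :=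
  Measurable φ ∧ (∀ x, 0 ≤ φ x) ∧ ∀ x, φ x ≤ 1

def IsEVariable (P : Set (Measure Ω)) (Z : Ω → ℝ≥0∞) : Prop :=
  Measurable Z ∧ ∀ μ ∈ P, ∫⁻ x, Z x ∂μ ≤ 1

theorem isTest_toReal {f : Ω → ℝ≥0∞} (hf : Measurable f) (hf1 : ∀ x, f x ≤ 1) :
    IsTest fun x => (f x).toReal :=
  ⟨hf.ennreal_toReal, fun _ => ENNReal.toReal_nonneg,
    fun x => ENNReal.toReal_le_of_le_ofReal zero_le_one (by simpa using hf1 x)⟩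

namespace IsTest

variable {φ : Ω → ℝ}

theorem integrable (hφ : IsTest φ) (μ : Measure Ω) [IsFiniteMeasure μ] : Integrable φ μ :=
  .of_bound hφ.1.aestronglyMeasurable 1 <| .of_forall fun x => by
    rw [Real.norm_of_nonneg (hφ.2.1 x)]
    exact hφ.2.2 x

theorem integral_le_one (hφ : IsTest φ) (μ : Measure Ω) [IsProbabilityMeasure μ] :
    ∫ x, φ x ∂μ ≤ 1 :=
  calc ∫ x, φ x ∂μ ≤ ∫ _, (1 : ℝ) ∂μ :=
        integral_mono (hφ.integrable μ) (integrable_const 1) hφ.2.2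
    _ = 1 := by simp

end IsTest

variable {P : Set (Measure Ω)} {ν : Measure Ω}

section TestDominated

variable [IsFiniteMeasure ν]
  (h : ∀ φ, IsTest φ → ∫ x, φ x ∂ν ≤ ⨆ μ : P, ∫ x, φ x ∂(μ : Measure Ω))
include h

theorem lintegral_le_of_forall_isTest {f : Ω → ℝ≥0∞} (hf : Measurable f) (hf1 : ∀ x, f x ≤ 1)
    {c : ℝ≥0∞} (hc : c ≠ ∞) (hfP : ∀ μ ∈ P, ∫⁻ x, f x ∂μ ≤ c) : ∫⁻ x, f x ∂ν ≤ c := by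
  have hint (μ : Measure Ω) : ∫ x, (f x).toReal ∂μ = (∫⁻ x, f x ∂μ).toReal :=
    integral_toReal hf.aemeasurable (.of_forall fun x => (hf1 x).trans_lt ENNReal.one_lt_top)
  have hsup : (⨆ μ : P, ∫ x, (f x).toReal ∂(μ : Measure Ω)) ≤ c.toReal :=
    Real.iSup_le (fun μ => hint μ ▸ ENNReal.toReal_mono hc (hfP μ μ.2)) ENNReal.toReal_nonneg
  have hν_fin : ∫⁻ x, f x ∂ν ≠ ∞ :=
    ne_top_of_le_ne_top (by simp) (lintegral_mono hf1)
  have hν := (h _ (isTest_toReal hf hf1)).trans hsup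
  rwa [hint, ENNReal.toReal_le_toReal hν_fin hc] at hν

theorem lintegral_min_natCast_le_one_of_forall_isTest {Z : Ω → ℝ≥0∞} (hZ : IsEVariable P Z)
    (n : ℕ) : ∫⁻ x, min (Z x) n ∂ν ≤ 1 := by
  rcases eq_or_ne n 0 with rfl | hn
  · simp
  have hn0 : (n : ℝ≥0∞) ≠ 0 := by exact_mod_cast hn
  have hntop : (n : ℝ≥0∞) ≠ ∞ := ENNReal.natCast_ne_top n
  have hmin : Measurable fun x => min (Z x) n := hZ.1.min measurable_const
  have key := lintegral_le_of_forall_isTest h (hmin.const_mul (n : ℝ≥0∞)⁻¹)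
    (fun x => (ENNReal.inv_mul_le_iff hn0 hntop).2 (by simp)) (ENNReal.inv_ne_top.2 hn0)
    fun μ hμ => by
      rw [lintegral_const_mul _ hmin]
      exact mul_le_of_le_one_right' ((lintegral_mono fun x => min_le_left _ _).trans (hZ.2 μ hμ))
  rwa [lintegral_const_mul _ hmin, ENNReal.inv_mul_le_iff hn0 hntop,
    ENNReal.mul_inv_cancel hn0 hntop] at key

theorem lintegral_le_one_of_forall_isTest {Z : Ω → ℝ≥0∞} (hZ : IsEVariable P Z) :
    ∫⁻ x, Z x ∂ν ≤ 1 := by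
  have hZ_eq (x : Ω) : ⨆ n : ℕ, min (Z x) n = Z x := by
    rw [← inf_iSup_eq, ENNReal.iSup_natCast, inf_top_eq]
  calc ∫⁻ x, Z x ∂ν = ∫⁻ x, ⨆ n : ℕ, min (Z x) n ∂ν := by simp_rw [hZ_eq]
    _ = ⨆ n : ℕ, ∫⁻ x, min (Z x) n ∂ν :=
        lintegral_iSup (fun _ => hZ.1.min measurable_const)
          fun _ _ hmk _ => min_le_min_left _ (Nat.mono_cast hmk)
    _ ≤ 1 := iSup_le (lintegral_min_natCast_le_one_of_forall_isTest h hZ)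

end TestDominated

section EffectiveNull

variable (H : ∀ Z, IsEVariable P Z → ∫⁻ x, Z x ∂ν ≤ 1) {φ : Ω → ℝ}
include H

theorem integral_le_of_forall_isEVariable [IsFiniteMeasure ν]
    (hP : ∀ μ ∈ P, IsFiniteMeasure μ) (hφ : IsTest φ) {c : ℝ} (hc : 0 < c)
    (hφP : ∀ μ ∈ P, ∫ x, φ x ∂μ ≤ c) : ∫ x, φ x ∂ν ≤ c := by
  have hint (μ : Measure Ω) [IsFiniteMeasure μ] :
      ∫⁻ x, ENNReal.ofReal (φ x / c) ∂μ = ENNReal.ofReal ((∫ x, φ x ∂μ) / c) := by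
    rw [← integral_div, ofReal_integral_eq_lintegral_ofReal ((hφ.integrable μ).div_const c)
      (.of_forall fun x => div_nonneg (hφ.2.1 x) hc.le)]
  have hZ : IsEVariable P fun x => ENNReal.ofReal (φ x / c) :=
    ⟨(hφ.1.div_const c).ennreal_ofReal, fun μ hμ => by
      have := hP μ hμ
      rw [hint, ENNReal.ofReal_le_one, div_le_one hc]
      exact hφP μ hμ⟩
  have hν := H _ hZ
  rwa [hint, ENNReal.ofReal_le_one, div_le_one hc] at hν

theorem integral_le_iSup_of_forall_isEVariable [IsProbabilityMeasure ν]
    (hP : ∀ μ ∈ P, IsProbabilityMeasure μ) (hφ : IsTest φ) :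
    ∫ x, φ x ∂ν ≤ ⨆ μ : P, ∫ x, φ x ∂(μ : Measure Ω) := by
  have hbdd : BddAbove (Set.range fun μ : P => ∫ x, φ x ∂(μ : Measure Ω)) := by
    refine ⟨1, ?_⟩
    rintro _ ⟨⟨μ, hμ⟩, rfl⟩
    have := hP μ hμ
    exact hφ.integral_le_one μ
  have hsup_nonneg : 0 ≤ ⨆ μ : P, ∫ x, φ x ∂(μ : Measure Ω) :=
    Real.iSup_nonneg fun _ => integral_nonneg hφ.2.1
  refine le_of_forall_pos_le_add fun ε hε =>
    integral_le_of_forall_isEVariable H (fun μ hμ => have := hP μ hμ; inferInstance) hφ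
      (by positivity) fun μ hμ => ?_
  exact (le_ciSup hbdd ⟨μ, hμ⟩).trans (le_add_of_nonneg_right hε.le)

end EffectiveNull

end

/-- A probability measure `ν` satisfies `E_ν[φ] ≤ sup_{μ ∈ P} E_μ[φ]` for every test `φ`
if and only if `ν` belongs to the effective null hypothesis `P_eff`, i.e.
`E_ν[Z] ≤ 1` for every e-variable `Z` for `P`. -/
theorem stmt19 {Ω : Type*} [MeasurableSpace Ω] (P : Set (Measure Ω))
    (hP : ∀ μ ∈ P, IsProbabilityMeasure μ)
    (ν : Measure Ω) [IsProbabilityMeasure ν] :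
    (∀ φ : Ω → ℝ, Measurable φ → (∀ x, 0 ≤ φ x) → (∀ x, φ x ≤ 1) →
        (∫ x, φ x ∂ν) ≤ ⨆ μ : P, ∫ x, φ x ∂(μ : Measure Ω)) ↔
      (∀ Z : Ω → ℝ≥0∞, Measurable Z → (∀ μ ∈ P, (∫⁻ x, Z x ∂μ) ≤ 1) →
        (∫⁻ x, Z x ∂ν) ≤ 1) := by
  constructor
  · intro h Z hZm hZP
    exact lintegral_le_one_of_forall_isTest (fun φ hφ => h φ hφ.1 hφ.2.1 hφ.2.2) ⟨hZm, hZP⟩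
  · intro H φ hφm hφ0 hφ1
    exact integral_le_iSup_of_forall_isEVariable (fun Z hZ => H Z hZ.1 hZ.2) hP ⟨hφm, hφ0, hφ1⟩
end
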